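/- Let v1, ..., vn be points in the plane with distinct x-coordinates, ordered by increasing x-coordinate, corresponding to a 1-page book embedding of a graph G (so no two edges of G have alternating endpoints in this order). Then G admits a plane drawing with these vertex positions in which every edge (u, v) with x(u) < x(v) is drawn as an x-monotone polygonal curve with exactly one bend, the bend being the intersection of a ray from u at angle π/2 − ε_uv and a ray from v at angle π/2 + ε_uv for some ε_uv > 0, and all edges leave their endpoints within angle ε of the positive y-direction for any prescribed ε > 0. -/

import Mathlib

open Set Real

noncomputable def bendX (xi yi xj yj c : ℝ) : ℝ := (xi + xj) / 2 + (yj - yi) / (2 * c)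

noncomputable def bendPt (xi yi xj yj c : ℝ) : ℝ × ℝ :=
  (bendX xi yi xj yj c, yi + (bendX xi yi xj yj c - xi) * c)

section
variable {xi yi xj yj c : ℝ}

lemma bendX_gt (hc : 0 < c) (hsl : |yj - yi| < c * (xj - xi)) :
    xi < bendX xi yi xj yj c := by
  have h1 : -(c * (xj - xi)) < yj - yi := neg_lt_of_abs_lt hsl
  have h2 : bendX xi yi xj yj c = xi + (c * (xj - xi) + (yj - yi)) / (2 * c) := by
    rw [bendX]; field_simp; ring
  rw [h2]
  have : 0 < (c * (xj - xi) + (yj - yi)) / (2 * c) := by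
    apply div_pos (by linarith) (by linarith)
  linarith

lemma bendX_lt (hc : 0 < c) (hsl : |yj - yi| < c * (xj - xi)) :
    bendX xi yi xj yj c < xj := by
  have h1 : yj - yi < c * (xj - xi) := lt_of_abs_lt hsl
  have h2 : bendX xi yi xj yj c = xj - (c * (xj - xi) - (yj - yi)) / (2 * c) := by
    rw [bendX]; field_simp; ring
  rw [h2]
  have : 0 < (c * (xj - xi) - (yj - yi)) / (2 * c) := by
    apply div_pos (by linarith) (by linarith)
  linarith

lemma bendY_right (hc : 0 < c) :
    yi + (bendX xi yi xj yj c - xi) * c = yj + (xj - bendX xi yi xj yj c) * c := by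
  have : c ≠ 0 := ne_of_gt hc
  rw [bendX]; field_simp; ring

lemma seg_param {a b p : ℝ × ℝ} (hp : p ∈ segment ℝ a b) :
    ∃ t : ℝ, 0 ≤ t ∧ t ≤ 1 ∧ p = (a.1 + t * (b.1 - a.1), a.2 + t * (b.2 - a.2)) := by
  rw [segment_eq_image] at hp
  obtain ⟨t, ⟨h0, h1⟩, rfl⟩ := hp
  refine ⟨t, h0, h1, ?_⟩
  apply Prod.ext <;> simp <;> ring

lemma curve_left_mem (hc : 0 < c) (hsl : |yj - yi| < c * (xj - xi))
    {p : ℝ × ℝ} (hp : p ∈ segment ℝ (xi, yi) (bendPt xi yi xj yj c)) :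
    xi ≤ p.1 ∧ p.1 ≤ bendX xi yi xj yj c ∧ p.2 = yi + (p.1 - xi) * c := by
  obtain ⟨t, h0, h1, rfl⟩ := seg_param hp
  have hX := bendX_gt hc hsl
  simp only [bendPt]
  refine ⟨by nlinarith, by nlinarith, by ring⟩

lemma curve_right_mem (hc : 0 < c) (hsl : |yj - yi| < c * (xj - xi))
    {p : ℝ × ℝ} (hp : p ∈ segment ℝ (bendPt xi yi xj yj c) (xj, yj)) :
    bendX xi yi xj yj c ≤ p.1 ∧ p.1 ≤ xj ∧ p.2 = yj + (xj - p.1) * c := by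
  obtain ⟨t, h0, h1, rfl⟩ := seg_param hp
  have hX := bendX_lt hc hsl
  have hY := bendY_right (xi := xi) (yi := yi) (xj := xj) (yj := yj) hc
  simp only [bendPt] at *
  refine ⟨by nlinarith, by nlinarith, ?_⟩
  rw [hY]; ring

lemma curve_mem (hc : 0 < c) (hsl : |yj - yi| < c * (xj - xi))
    {p : ℝ × ℝ}
    (hp : p ∈ segment ℝ (xi, yi) (bendPt xi yi xj yj c) ∪
      segment ℝ (bendPt xi yi xj yj c) (xj, yj)) :
    xi ≤ p.1 ∧ p.1 ≤ xj ∧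
    p.2 ≤ yi + (p.1 - xi) * c ∧ p.2 ≤ yj + (xj - p.1) * c ∧
    (p.2 = yi + (p.1 - xi) * c ∨ p.2 = yj + (xj - p.1) * c) := by
  have hXc : bendX xi yi xj yj c * (2 * c) = (xi + xj) * c + (yj - yi) := by
    rw [bendX]; field_simp
  rcases hp with hp | hp
  · obtain ⟨h1, h2, h3⟩ := curve_left_mem hc hsl hp
    have hX := bendX_lt hc hsl
    refine ⟨h1, by linarith, le_of_eq h3, ?_, Or.inl h3⟩
    nlinarith [mul_le_mul_of_nonneg_right h2 (by linarith : (0:ℝ) ≤ 2 * c)]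
  · obtain ⟨h1, h2, h3⟩ := curve_right_mem hc hsl hp
    have hX := bendX_gt hc hsl
    refine ⟨by linarith, h2, ?_, le_of_eq h3, Or.inr h3⟩
    nlinarith [mul_le_mul_of_nonneg_right h1 (by linarith : (0:ℝ) ≤ 2 * c)]

lemma curve_endpoint_left (hc : 0 < c) (hsl : |yj - yi| < c * (xj - xi))
    {p : ℝ × ℝ}
    (hp : p ∈ segment ℝ (xi, yi) (bendPt xi yi xj yj c) ∪
      segment ℝ (bendPt xi yi xj yj c) (xj, yj))
    (hpx : p.1 = xi) : p = (xi, yi) := by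
  rcases hp with hp | hp
  · obtain ⟨t, h0, h1, rfl⟩ := seg_param hp
    have hX := bendX_gt hc hsl
    simp only [bendPt] at *
    have ht : t = 0 := by nlinarith
    subst ht
    apply Prod.ext <;> simp
  · obtain ⟨h1, h2, h3⟩ := curve_right_mem hc hsl hp
    have hX := bendX_gt hc hsl
    exfalso; rw [hpx] at h1; linarith

lemma curve_endpoint_right (hc : 0 < c) (hsl : |yj - yi| < c * (xj - xi))
    {p : ℝ × ℝ}
    (hp : p ∈ segment ℝ (xi, yi) (bendPt xi yi xj yj c) ∪
      segment ℝ (bendPt xi yi xj yj c) (xj, yj))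
    (hpx : p.1 = xj) : p = (xj, yj) := by
  rcases hp with hp | hp
  · obtain ⟨h1, h2, h3⟩ := curve_left_mem hc hsl hp
    have hX := bendX_lt hc hsl
    exfalso; rw [hpx] at h2; linarith
  · obtain ⟨t, h0, h1, rfl⟩ := seg_param hp
    have hX := bendX_lt hc hsl
    simp only [bendPt] at *
    have ht : t = 1 := by nlinarith
    subst ht
    have hY := bendY_right (xi := xi) (yi := yi) (xj := xj) (yj := yj) hc
    apply Prod.ext <;> simp

end

lemma bendPt_rays {xi yi xj yj c : ℝ} (hc : 0 < c) (hsl : |yj - yi| < c * (xj - xi)) :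
    (∃ s : ℝ, 0 < s ∧ bendPt xi yi xj yj c =
      (xi, yi) + s • (Real.cos (π / 2 - Real.arctan c⁻¹),
        Real.sin (π / 2 - Real.arctan c⁻¹))) ∧
    (∃ t : ℝ, 0 < t ∧ bendPt xi yi xj yj c =
      (xj, yj) + t • (Real.cos (π / 2 + Real.arctan c⁻¹),
        Real.sin (π / 2 + Real.arctan c⁻¹))) := by
  set δ := Real.arctan c⁻¹ with hδdef
  have hδpos : 0 < δ := by
    rw [hδdef, ← Real.arctan_zero]
    exact Real.arctan_strictMono (inv_pos.mpr hc)
  have hδhalf : δ < π / 2 := Real.arctan_lt_pi_div_two _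
  have hcos : 0 < Real.cos δ := Real.cos_pos_of_mem_Ioo ⟨by linarith, hδhalf⟩
  have hsin : 0 < Real.sin δ :=
    Real.sin_pos_of_pos_of_lt_pi hδpos (by linarith [Real.pi_pos])
  have hsne : Real.sin δ ≠ 0 := ne_of_gt hsin
  have htan : Real.tan δ = c⁻¹ := Real.tan_arctan _
  have hkey : Real.cos δ = c * Real.sin δ := by
    rw [Real.tan_eq_sin_div_cos, div_eq_iff (ne_of_gt hcos)] at htan
    rw [htan]; field_simp
  have hXgt := bendX_gt hc hsl
  have hXlt := bendX_lt hc hsl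
  constructor
  · refine ⟨(bendX xi yi xj yj c - xi) / Real.sin δ, div_pos (by linarith) hsin, ?_⟩
    rw [Real.cos_pi_div_two_sub, Real.sin_pi_div_two_sub]
    apply Prod.ext
    · simp only [bendPt, Prod.fst_add, Prod.smul_fst, smul_eq_mul]
      rw [div_mul_cancel₀ _ hsne]; ring
    · simp only [bendPt, Prod.snd_add, Prod.smul_snd, smul_eq_mul]
      rw [hkey]
      field_simp
  · refine ⟨(xj - bendX xi yi xj yj c) / Real.sin δ, div_pos (by linarith) hsin, ?_⟩
    rw [show π / 2 + δ = δ + π / 2 by ring, Real.cos_add_pi_div_two,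
      Real.sin_add_pi_div_two]
    apply Prod.ext
    · simp only [bendPt, Prod.fst_add, Prod.smul_fst, smul_eq_mul]
      field_simp
      ring
    · simp only [bendPt, Prod.snd_add, Prod.smul_snd, smul_eq_mul]
      rw [bendY_right hc, hkey]
      field_simp
/-- Let `v 0, …, v (n-1)` be points in the plane with strictly increasing (hence
distinct) `x`-coordinates, corresponding to a 1-page book embedding of a graph `G` (no
two edges of `G` have alternating endpoints in this order).  Then `G` admits a plane
drawing with these vertex positions in which every edge `(i, j)` with `i < j` is drawn
as an `x`-monotone polygonal curve with exactly one bend, the bend being the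
intersection of a ray from `v i` at angle `π/2 − ε_ij` and a ray from `v j` at angle
`π/2 + ε_ij` for some `0 < ε_ij < ε`; in particular all edges leave their endpoints
within angle `ε` of the positive `y`-direction, for any prescribed `ε > 0`. -/
theorem one_page_book_embedding_one_bend_drawing
    (n : ℕ) (G : SimpleGraph (Fin n)) (v : Fin n → ℝ × ℝ)
    (hx : StrictMono fun i => (v i).1)
    (hbook : ∀ a b c d : Fin n, G.Adj a b → G.Adj c d → a < b → c < d →
      ¬(a < c ∧ c < b ∧ b < d))
    (ε : ℝ) (hε : 0 < ε) :
    ∃ (bp : Fin n → Fin n → ℝ × ℝ) (δ : Fin n → Fin n → ℝ),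
      (∀ i j, G.Adj i j → i < j →
        0 < δ i j ∧ δ i j < ε ∧
        (∃ s : ℝ, 0 < s ∧
          bp i j = v i + s • (Real.cos (π / 2 - δ i j), Real.sin (π / 2 - δ i j))) ∧
        (∃ t : ℝ, 0 < t ∧
          bp i j = v j + t • (Real.cos (π / 2 + δ i j), Real.sin (π / 2 + δ i j)))) ∧
      (∀ i j k l : Fin n, G.Adj i j → G.Adj k l → i < j → k < l →
        s(i, j) ≠ s(k, l) →
        (segment ℝ (v i) (bp i j) ∪ segment ℝ (bp i j) (v j)) ∩
          (segment ℝ (v k) (bp k l) ∪ segment ℝ (bp k l) (v l)) ⊆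
        v '' (({i, j} : Set (Fin n)) ∩ {k, l})) := by
  classical
  by_cases hn : n ≤ 1
  · refine ⟨fun _ _ => 0, fun _ _ => ε / 2, ?_, ?_⟩
    · intro i j _ hij
      exact absurd (Fin.lt_iff_val_lt_val.mp hij) (by have := j.isLt; omega)
    · intro i j k l _ _ hij _ _
      exact absurd (Fin.lt_iff_val_lt_val.mp hij) (by have := j.isLt; omega)
  push_neg at hn
  -- global constants
  obtain ⟨S, hSdef⟩ : ∃ S : ℝ, S = ∑ i : Fin n, (|(v i).1| + |(v i).2|) := ⟨_, rfl⟩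
  have hS0 : 0 ≤ S := hSdef ▸ Finset.sum_nonneg fun i _ => by positivity
  obtain ⟨A, hAdef⟩ : ∃ A : ℝ, A = 1 + 2 * S := ⟨_, rfl⟩
  have hA1 : 1 ≤ A := by rw [hAdef]; linarith
  have habsx : ∀ a : Fin n, |(v a).1| ≤ S := by
    intro a
    rw [hSdef]
    calc |(v a).1| ≤ |(v a).1| + |(v a).2| := le_add_of_nonneg_right (abs_nonneg _)
    _ ≤ _ := Finset.single_le_sum (f := fun i => |(v i).1| + |(v i).2|)
        (fun i _ => by positivity) (Finset.mem_univ a)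
  have habsy : ∀ a : Fin n, |(v a).2| ≤ S := by
    intro a
    rw [hSdef]
    calc |(v a).2| ≤ |(v a).1| + |(v a).2| := le_add_of_nonneg_left (abs_nonneg _)
    _ ≤ _ := Finset.single_le_sum (f := fun i => |(v i).1| + |(v i).2|)
        (fun i _ => by positivity) (Finset.mem_univ a)
  have hAx : ∀ a b : Fin n, |(v a).1 - (v b).1| ≤ A - 1 := by
    intro a b
    have h1 := habsx a; have h2 := habsx b
    calc |(v a).1 - (v b).1| ≤ |(v a).1| + |(v b).1| := abs_sub _ _
    _ ≤ A - 1 := by rw [hAdef]; linarith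
  have hAy : ∀ a b : Fin n, |(v a).2 - (v b).2| ≤ A - 1 := by
    intro a b
    have h1 := habsy a; have h2 := habsy b
    calc |(v a).2 - (v b).2| ≤ |(v a).2| + |(v b).2| := abs_sub _ _
    _ ≤ A - 1 := by rw [hAdef]; linarith
  -- minimal horizontal gap
  have hP : (Finset.univ.filter fun p : Fin n × Fin n => p.1 < p.2).Nonempty := by
    refine ⟨(⟨0, by omega⟩, ⟨1, by omega⟩), ?_⟩
    exact Finset.mem_filter.mpr ⟨Finset.mem_univ _, Fin.mk_lt_mk.mpr one_pos⟩
  obtain ⟨d, hddef⟩ : ∃ d : ℝ,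
      d = (Finset.univ.filter fun p : Fin n × Fin n => p.1 < p.2).inf' hP
        (fun p => (v p.2).1 - (v p.1).1) := ⟨_, rfl⟩
  have hd0 : 0 < d := by
    rw [hddef, Finset.lt_inf'_iff]
    intro p hp
    rw [Finset.mem_filter] at hp
    exact sub_pos.mpr (hx hp.2)
  have hdle : ∀ i j : Fin n, i < j → d ≤ (v j).1 - (v i).1 := by
    intro i j h
    rw [hddef]
    exact Finset.inf'_le (fun p : Fin n × Fin n => (v p.2).1 - (v p.1).1)
      (Finset.mem_filter.mpr ⟨Finset.mem_univ (i, j), h⟩)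
  have hdne : d ≠ 0 := ne_of_gt hd0
  have hAd : 0 < A / d := div_pos (by linarith) hd0
  -- the tower of slopes
  obtain ⟨E, hEdef⟩ : ∃ E : ℝ, E = if ε < π / 2 then (Real.tan ε)⁻¹ else 0 := ⟨_, rfl⟩
  have hE0 : 0 ≤ E := by
    rw [hEdef]; split_ifs with h
    · exact le_of_lt (inv_pos.mpr (Real.tan_pos_of_pos_of_lt_pi_div_two hε h))
    · exact le_refl 0
  obtain ⟨K, hKdef⟩ : ∃ K : ℝ, K = A / d + 1 + E := ⟨_, rfl⟩
  have hK0 : 0 < K := by rw [hKdef]; linarith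
  obtain ⟨cc, hcc0, hccs⟩ : ∃ cc : ℕ → ℝ, cc 0 = K ∧
      ∀ m, cc (m + 1) = (A / d + 1) * (cc m + 1) + 1 :=
    ⟨fun m => Nat.rec K (fun _ p => (A / d + 1) * (p + 1) + 1) m, rfl, fun m => rfl⟩
  have hccK : ∀ m, K ≤ cc m := by
    intro m
    induction m with
    | zero => exact le_of_eq hcc0.symm
    | succ m ih =>
      have h5 : (1:ℝ) * (cc m + 1) ≤ (A / d + 1) * (cc m + 1) :=
        mul_le_mul_of_nonneg_right (by linarith) (by linarith)
      rw [hccs]; linarith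
  have hccpos : ∀ m, 0 < cc m := fun m => lt_of_lt_of_le hK0 (hccK m)
  have hccmono : StrictMono cc := by
    apply strictMono_nat_of_lt_succ
    intro m
    have h0 := hccpos m
    have h5 : (1:ℝ) * (cc m + 1) ≤ (A / d + 1) * (cc m + 1) :=
      mul_le_mul_of_nonneg_right (by linarith) (by linarith)
    rw [hccs]; linarith
  have hgrow : ∀ m m' : ℕ, m < m' → A * (cc m + 1) + d ≤ d * cc m' := by
    intro m m' h
    have h1 : d * cc (m + 1) = (A + d) * (cc m + 1) + d := by
      rw [hccs]; field_simp
    have h2 : cc (m + 1) ≤ cc m' := hccmono.monotone h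
    have h3 := hccpos m
    have h4 : 0 ≤ d * (cc m + 1) := mul_nonneg hd0.le (by linarith)
    have h5 : d * cc (m + 1) ≤ d * cc m' := mul_le_mul_of_nonneg_left h2 hd0.le
    linarith
  -- slope condition for every edge
  have hslope : ∀ i j : Fin n, i < j → ∀ m : ℕ,
      |(v j).2 - (v i).2| < cc m * ((v j).1 - (v i).1) := by
    intro i j hij m
    have h1 : d ≤ (v j).1 - (v i).1 := hdle i j hij
    have h2 : K ≤ cc m := hccK m
    have h3 : |(v j).2 - (v i).2| ≤ A - 1 := hAy j i
    have h4 : A + d ≤ K * d := by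
      have e1 : A + d = (A / d + 1) * d := by field_simp
      have e2 : A / d + 1 ≤ K := by rw [hKdef]; linarith
      rw [e1]
      exact mul_le_mul_of_nonneg_right e2 hd0.le
    have h5 : K * d ≤ cc m * ((v j).1 - (v i).1) :=
      mul_le_mul h2 h1 hd0.le (hccpos m).le
    linarith
  -- the drawing
  set bp : Fin n → Fin n → ℝ × ℝ :=
    fun i j => bendPt (v i).1 (v i).2 (v j).1 (v j).2 (cc ((j : ℕ) - (i : ℕ))) with hbp
  -- curve membership facts
  have hcmem : ∀ (i j : Fin n), i < j → ∀ p : ℝ × ℝ,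
      p ∈ segment ℝ (v i) (bp i j) ∪ segment ℝ (bp i j) (v j) →
      (v i).1 ≤ p.1 ∧ p.1 ≤ (v j).1 ∧
      p.2 ≤ (v i).2 + (p.1 - (v i).1) * cc ((j : ℕ) - (i : ℕ)) ∧
      p.2 ≤ (v j).2 + ((v j).1 - p.1) * cc ((j : ℕ) - (i : ℕ)) ∧
      (p.2 = (v i).2 + (p.1 - (v i).1) * cc ((j : ℕ) - (i : ℕ)) ∨
       p.2 = (v j).2 + ((v j).1 - p.1) * cc ((j : ℕ) - (i : ℕ))) := by
    intro i j h p hp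
    exact curve_mem (hccpos _) (hslope i j h _) hp
  have hendl : ∀ (i j : Fin n), i < j → ∀ p : ℝ × ℝ,
      p ∈ segment ℝ (v i) (bp i j) ∪ segment ℝ (bp i j) (v j) →
      p.1 = (v i).1 → p = v i := by
    intro i j h p hp hpx
    exact curve_endpoint_left (hccpos _) (hslope i j h _) hp hpx
  have hendr : ∀ (i j : Fin n), i < j → ∀ p : ℝ × ℝ,
      p ∈ segment ℝ (v i) (bp i j) ∪ segment ℝ (bp i j) (v j) →
      p.1 = (v j).1 → p = v j := by
    intro i j h p hp hpx
    exact curve_endpoint_right (hccpos _) (hslope i j h _) hp hpx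
  -- disjoint edges
  have mainDisj : ∀ i j k l : Fin n, i < j → k < l → j ≤ k → ∀ p : ℝ × ℝ,
      p ∈ (segment ℝ (v i) (bp i j) ∪ segment ℝ (bp i j) (v j)) ∩
        (segment ℝ (v k) (bp k l) ∪ segment ℝ (bp k l) (v l)) →
      p ∈ v '' (({i, j} : Set (Fin n)) ∩ {k, l}) := by
    intro i j k l hij hkl hjk p hp
    obtain ⟨hp1, hp2⟩ := hp
    obtain ⟨h1, h2, -, -, -⟩ := hcmem i j hij p hp1
    obtain ⟨h3, h4, -, -, -⟩ := hcmem k l hkl p hp2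
    have hxjk : (v j).1 ≤ (v k).1 := hx.monotone hjk
    have hpj : p.1 = (v j).1 := le_antisymm h2 (by linarith)
    have hjk' : j = k := by
      rcases eq_or_lt_of_le hjk with h | h
      · exact h
      · exfalso
        have := hx h
        simp only at this
        linarith
    have hp' : p = v j := hendr i j hij p hp1 hpj
    exact ⟨j, ⟨by simp, by simp [hjk']⟩, hp'.symm⟩
  -- nested edges: (k,l) inside (i,j)
  have mainNest : ∀ i j k l : Fin n, i < j → k < l → i ≤ k → l ≤ j →
      ¬(i = k ∧ j = l) → ∀ p : ℝ × ℝ,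
      p ∈ (segment ℝ (v i) (bp i j) ∪ segment ℝ (bp i j) (v j)) ∩
        (segment ℝ (v k) (bp k l) ∪ segment ℝ (bp k l) (v l)) →
      p ∈ v '' (({i, j} : Set (Fin n)) ∩ {k, l}) := by
    intro i j k l hij hkl hik hlj hne p hp
    obtain ⟨hpf, hpe⟩ := hp
    have hmlt : ((l : ℕ) - (k : ℕ)) < ((j : ℕ) - (i : ℕ)) := by
      have h1 : (i : ℕ) ≤ (k : ℕ) := hik
      have h2 : (k : ℕ) < (l : ℕ) := hkl
      have h3 : (l : ℕ) ≤ (j : ℕ) := hlj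
      have h4 : ¬((i : ℕ) = (k : ℕ) ∧ (j : ℕ) = (l : ℕ)) := by
        rintro ⟨ha, hb⟩; exact hne ⟨Fin.ext ha, Fin.ext hb⟩
      omega
    have hcelt : cc ((l : ℕ) - (k : ℕ)) < cc ((j : ℕ) - (i : ℕ)) := hccmono hmlt
    have hgrowth := hgrow _ _ hmlt
    obtain ⟨hf1, hf2, hf3, hf4, hf5⟩ := hcmem i j hij p hpf
    obtain ⟨he1, he2, he3, he4, he5⟩ := hcmem k l hkl p hpe
    have hcf0 := hccpos ((j : ℕ) - (i : ℕ))
    have hce0 := hccpos ((l : ℕ) - (k : ℕ))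
    have hxb : p.1 - (v k).1 ≤ A - 1 := by
      have h5 : (v l).1 - (v k).1 ≤ A - 1 := le_trans (le_abs_self _) (hAx l k)
      linarith
    have hxb2 : (v l).1 - p.1 ≤ A - 1 := by
      have h5 : (v l).1 - (v k).1 ≤ A - 1 := le_trans (le_abs_self _) (hAx l k)
      linarith
    rcases hf5 with hy | hy
    · -- p lies on the left ray of the outer edge
      rcases eq_or_lt_of_le hik with hik' | hik'
      · subst hik'
        rcases eq_or_lt_of_le he1 with hx1 | hx1
        · have hp' : p = v i := hendl i l hkl p hpe hx1.symm
          exact ⟨i, ⟨by simp, by simp⟩, hp'.symm⟩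
        · exfalso
          have hmul := mul_lt_mul_of_pos_right hcelt
            (show (0:ℝ) < p.1 - (v i).1 by linarith)
          linarith [he3, hy]
      · exfalso
        have hd1 : d ≤ (v k).1 - (v i).1 := hdle i k hik'
        have hb1 : d * cc ((j : ℕ) - (i : ℕ)) ≤
            (p.1 - (v i).1) * cc ((j : ℕ) - (i : ℕ)) :=
          mul_le_mul_of_nonneg_right (by linarith) hcf0.le
        have hb2 : (p.1 - (v k).1) * cc ((l : ℕ) - (k : ℕ)) ≤
            (A - 1) * cc ((l : ℕ) - (k : ℕ)) :=
          mul_le_mul_of_nonneg_right hxb hce0.le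
        have hyk : (v k).2 - (v i).2 ≤ A - 1 := le_trans (le_abs_self _) (hAy k i)
        linarith [he3, hy]
    · -- p lies on the right ray of the outer edge
      rcases eq_or_lt_of_le hlj with hlj' | hlj'
      · subst hlj'
        rcases eq_or_lt_of_le he2 with hx1 | hx1
        · have hp' : p = v l := hendr k l hkl p hpe hx1
          exact ⟨l, ⟨by simp, by simp⟩, hp'.symm⟩
        · exfalso
          have hmul := mul_lt_mul_of_pos_right hcelt
            (show (0:ℝ) < (v l).1 - p.1 by linarith)
          linarith [he4, hy]
      · exfalso
        have hd1 : d ≤ (v j).1 - (v l).1 := hdle l j hlj'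
        have hb1 : d * cc ((j : ℕ) - (i : ℕ)) ≤
            ((v j).1 - p.1) * cc ((j : ℕ) - (i : ℕ)) :=
          mul_le_mul_of_nonneg_right (by linarith) hcf0.le
        have hb2 : ((v l).1 - p.1) * cc ((l : ℕ) - (k : ℕ)) ≤
            (A - 1) * cc ((l : ℕ) - (k : ℕ)) :=
          mul_le_mul_of_nonneg_right hxb2 hce0.le
        have hyk : (v l).2 - (v j).2 ≤ A - 1 := le_trans (le_abs_self _) (hAy l j)
        linarith [he4, hy]
  refine ⟨bp, fun i j => Real.arctan (cc ((j : ℕ) - (i : ℕ)))⁻¹, ?_, ?_⟩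
  · intro i j _ hij
    have hc0 : 0 < cc ((j : ℕ) - (i : ℕ)) := hccpos _
    have hsl := hslope i j hij ((j : ℕ) - (i : ℕ))
    refine ⟨?_, ?_, (bendPt_rays hc0 hsl).1, (bendPt_rays hc0 hsl).2⟩
    · show 0 < Real.arctan (cc ((j : ℕ) - (i : ℕ)))⁻¹
      rw [← Real.arctan_zero]
      exact Real.arctan_strictMono (inv_pos.mpr hc0)
    · show Real.arctan (cc ((j : ℕ) - (i : ℕ)))⁻¹ < ε
      by_cases hcase : ε < π / 2
      · have hEε : E = (Real.tan ε)⁻¹ := by rw [hEdef, if_pos hcase]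
        have htanpos : 0 < Real.tan ε := Real.tan_pos_of_pos_of_lt_pi_div_two hε hcase
        have h1 : (Real.tan ε)⁻¹ < cc ((j : ℕ) - (i : ℕ)) := by
          have h2 := hccK ((j : ℕ) - (i : ℕ))
          rw [hKdef, hEε] at h2
          linarith
        have h2 : (cc ((j : ℕ) - (i : ℕ)))⁻¹ < Real.tan ε := by
          rw [← inv_inv (Real.tan ε)]
          exact inv_strictAnti₀ (inv_pos.mpr htanpos) h1
        have h3 := Real.arctan_strictMono h2
        rwa [Real.arctan_tan (by linarith [Real.pi_pos]) hcase] at h3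
      · push_neg at hcase
        linarith [Real.arctan_lt_pi_div_two (cc ((j : ℕ) - (i : ℕ)))⁻¹]
  · intro i j k l hadjij hadjkl hij hkl hne p hp
    rcases le_or_gt j k with h | h
    · exact mainDisj i j k l hij hkl h p hp
    rcases le_or_gt l i with h' | h'
    · have := mainDisj k l i j hkl hij h' p ⟨hp.2, hp.1⟩
      rwa [Set.inter_comm ({k, l} : Set (Fin n))] at this
    have hnexy : ¬(i = k ∧ j = l) := fun hh => hne (by rw [hh.1, hh.2])
    have hnexy' : ¬(k = i ∧ l = j) := fun hh => hne (by rw [hh.1, hh.2])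
    rcases le_total i k with hik | hki
    · rcases le_total l j with hlj | hjl
      · exact mainNest i j k l hij hkl hik hlj hnexy p hp
      · rcases eq_or_lt_of_le hik with hik' | hik'
        · have := mainNest k l i j hkl hij (le_of_eq hik'.symm) hjl hnexy' p ⟨hp.2, hp.1⟩
          rwa [Set.inter_comm ({k, l} : Set (Fin n))] at this
        · rcases eq_or_lt_of_le hjl with hjl' | hjl'
          · exact mainNest i j k l hij hkl hik (le_of_eq hjl'.symm) hnexy p hp
          · exact absurd ⟨hik', h, hjl'⟩ (hbook i j k l hadjij hadjkl hij hkl)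
    · rcases le_total j l with hjl | hlj
      · have := mainNest k l i j hkl hij hki hjl hnexy' p ⟨hp.2, hp.1⟩
        rwa [Set.inter_comm ({k, l} : Set (Fin n))] at this
      · rcases eq_or_lt_of_le hki with hki' | hki'
        · exact mainNest i j k l hij hkl (le_of_eq hki'.symm) hlj hnexy p hp
        · rcases eq_or_lt_of_le hlj with hlj' | hlj'
          · have := mainNest k l i j hkl hij hki (le_of_eq hlj'.symm) hnexy' p ⟨hp.2, hp.1⟩
            rwa [Set.inter_comm ({k, l} : Set (Fin n))] at this
          · exact absurd ⟨hki', h', hlj'⟩ (hbook k l i j hadjkl hadjij hkl hij)
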